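/- arXiv:2012.14657 — 2 statements merged into one kernel-verified Lean document; each statement's English description precedes it below -/
import Mathlib

section
/- Fix t ≥ 0, an n×n real matrix S, and Ỹ ∈ ℝ^n. As λ → 0+, the vectors w^λ_{⌊t/λ⌋} := λ Σ_{j=0}^{⌊t/λ⌋-1} (I - λS)^j Ỹ converge to w_t := -Σ_{j≥1} ((-t)^j / j!) S^{j-1} Ỹ. -/
open Filter Topology

private lemma hockey_stick (m k : ℕ) : ∑ j ∈ Finset.range m, j.choose k = m.choose (k+1) := by
  induction m with
  | zero => simp
  | succ m ih => rw [Finset.sum_range_succ, ih, Nat.choose_succ_succ, Nat.add_comm]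

private lemma matrix_sum_eq {n : ℕ} (S : Matrix (Fin n) (Fin n) ℝ) (m : ℕ) (lam : ℝ) :
    ∑ j ∈ Finset.range m, (1 - lam • S) ^ j
      = ∑ k ∈ Finset.range m, ((-lam) ^ k * (m.choose (k+1) : ℝ)) • S ^ k := by
  have h1 : ∀ j ∈ Finset.range m, (1 - lam • S) ^ j
      = ∑ k ∈ Finset.range m, ((-lam) ^ k * (j.choose k : ℝ)) • S ^ k := by
    intro j hj
    have hc : Commute (-(lam • S)) (1 : Matrix (Fin n) (Fin n) ℝ) := Commute.one_right _
    have e1 : (1 : Matrix (Fin n) (Fin n) ℝ) - lam • S = -(lam • S) + 1 := by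
      rw [sub_eq_neg_add]
    rw [e1, hc.add_pow]
    rw [Finset.sum_subset (Finset.range_subset_range.mpr (Nat.succ_le_of_lt (Finset.mem_range.mp hj)))]
    · apply Finset.sum_congr rfl
      intro k _
      rw [one_pow, mul_one, ← neg_smul, smul_pow, smul_mul_assoc, ← nsmul_eq_mul',
        mul_smul, Nat.cast_smul_eq_nsmul]
    · intro k _ hk
      have : j.choose k = 0 := Nat.choose_eq_zero_of_lt (by simpa using hk)
      simp [this]
  rw [Finset.sum_congr rfl h1, Finset.sum_comm]
  apply Finset.sum_congr rfl
  intro k _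
  rw [← Finset.sum_smul, ← Finset.mul_sum, ← Nat.cast_sum, hockey_stick]

private lemma sum_mulVec_aux {n : ℕ} (s : Finset ℕ) (M : ℕ → Matrix (Fin n) (Fin n) ℝ)
    (Y : Fin n → ℝ) : (∑ k ∈ s, M k).mulVec Y = ∑ k ∈ s, (M k).mulVec Y := by
  let φ : Matrix (Fin n) (Fin n) ℝ →+ (Fin n → ℝ) :=
    { toFun := fun A => A.mulVec Y
      map_zero' := Matrix.zero_mulVec Y
      map_add' := fun A B => Matrix.add_mulVec A B Y }
  exact map_sum φ M s

set_option maxHeartbeats 1000000 in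
theorem stmt_4 (n : ℕ) (S : Matrix (Fin n) (Fin n) ℝ) (Y : Fin n → ℝ)
    (t : ℝ) (ht : 0 ≤ t) :
    Filter.Tendsto
      (fun lam : ℝ =>
        lam • (∑ j ∈ Finset.range ⌊t / lam⌋₊, (1 - lam • S) ^ j).mulVec Y)
      (𝓝[>] 0)
      (𝓝 (-∑' j : ℕ, ((-t) ^ (j + 1) / (Nat.factorial (j + 1) : ℝ)) • (S ^ j).mulVec Y)) := by
  rcases eq_or_lt_of_le ht with rfl | htpos
  · -- trivial case t = 0
    have h0 : ∀ lam : ℝ, ⌊(0:ℝ) / lam⌋₊ = 0 := by intro lam; simp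
    simp only [h0, Finset.range_zero, Finset.sum_empty, Matrix.zero_mulVec, smul_zero]
    have : (-∑' j : ℕ, ((-(0:ℝ)) ^ (j + 1) / (Nat.factorial (j + 1) : ℝ)) • (S ^ j).mulVec Y)
        = 0 := by
      simp
    rw [this]
    exact tendsto_const_nhds
  -- main case t > 0
  set v : ℕ → (Fin n → ℝ) := fun k => (S ^ k).mulVec Y with hv
  set f : ℝ → ℕ → (Fin n → ℝ) :=
    fun lam k => ((-lam) ^ k * lam * ((⌊t / lam⌋₊).choose (k+1) : ℝ)) • v k with hf
  set g : ℕ → (Fin n → ℝ) :=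
    fun k => (-((-t) ^ (k+1) / ((k+1).factorial : ℝ))) • v k with hg
  -- Step 1: rewrite the function as a tsum
  have step1 : ∀ lam : ℝ,
      lam • (∑ j ∈ Finset.range ⌊t / lam⌋₊, (1 - lam • S) ^ j).mulVec Y = ∑' k, f lam k := by
    intro lam
    have hzero : ∀ k ∉ Finset.range ⌊t / lam⌋₊, f lam k = 0 := by
      intro k hk
      have hk' : ⌊t / lam⌋₊ < k + 1 := Nat.lt_succ_of_le (le_of_not_gt (by simpa using hk))
      simp [hf, Nat.choose_eq_zero_of_lt hk']
    rw [matrix_sum_eq, tsum_eq_sum hzero, sum_mulVec_aux, Finset.smul_sum]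
    apply Finset.sum_congr rfl
    intro k _
    simp only [hf, Matrix.smul_mulVec, smul_smul]
    congr 1
    ring
  -- upper bound: lam * floor ≤ t  for lam > 0
  have hub : ∀ lam : ℝ, 0 < lam → lam * (⌊t / lam⌋₊ : ℝ) ≤ t := by
    intro lam hlam
    have h1 : (⌊t / lam⌋₊ : ℝ) ≤ t / lam := Nat.floor_le (div_nonneg ht hlam.le)
    have h2 : t / lam * lam = t := div_mul_cancel₀ t (ne_of_gt hlam)
    nlinarith
  -- lam * floor tends to t
  have hlm : Tendsto (fun lam : ℝ => lam * (⌊t / lam⌋₊ : ℝ)) (𝓝[>] 0) (𝓝 t) := by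
    apply tendsto_of_tendsto_of_tendsto_of_le_of_le' (g := fun lam : ℝ => t - lam)
      (h := fun _ : ℝ => t)
    · have : Tendsto (fun lam : ℝ => t - lam) (𝓝 (0:ℝ)) (𝓝 (t - 0)) :=
        tendsto_const_nhds.sub tendsto_id
      simpa using this.mono_left nhdsWithin_le_nhds
    · exact tendsto_const_nhds
    · filter_upwards [self_mem_nhdsWithin] with lam hlam
      have hlam' : (0:ℝ) < lam := hlam
      have h1 : t / lam < (⌊t / lam⌋₊ : ℝ) + 1 := Nat.lt_floor_add_one _
      have h2 : t / lam * lam = t := div_mul_cancel₀ t (ne_of_gt hlam')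
      nlinarith
    · filter_upwards [self_mem_nhdsWithin] with lam hlam
      exact hub lam hlam
  -- pointwise scalar limits
  have hscal : ∀ k : ℕ, Tendsto (fun lam : ℝ => lam ^ (k+1) * ((⌊t / lam⌋₊).choose (k+1) : ℝ))
      (𝓝[>] 0) (𝓝 (t ^ (k+1) / ((k+1).factorial : ℝ))) := by
    intro k
    have hfac : (0:ℝ) < ((k+1).factorial : ℝ) := by
      exact_mod_cast Nat.factorial_pos (k+1)
    have hprod : Tendsto
        (fun lam : ℝ => ∏ i ∈ Finset.range (k+1), (lam * (⌊t / lam⌋₊ : ℝ) - lam * (i:ℝ)))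
        (𝓝[>] 0) (𝓝 (t ^ (k+1))) := by
      have h := tendsto_finset_prod
        (f := fun (i : ℕ) (lam : ℝ) => lam * (⌊t / lam⌋₊ : ℝ) - lam * (i:ℝ))
        (a := fun _ => t) (x := 𝓝[>] (0:ℝ)) (Finset.range (k+1)) ?_
      · simpa [Finset.prod_const, Finset.card_range] using h
      · intro i _
        have hi : Tendsto (fun lam : ℝ => lam * (i:ℝ)) (𝓝[>] 0) (𝓝 0) := by
          have : Tendsto (fun lam : ℝ => lam * (i:ℝ)) (𝓝 (0:ℝ)) (𝓝 (0 * (i:ℝ))) :=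
            tendsto_id.mul_const _
          simpa using this.mono_left nhdsWithin_le_nhds
        simpa using hlm.sub hi
    have hev : ∀ᶠ lam in 𝓝[>] (0:ℝ),
        (∏ i ∈ Finset.range (k+1), (lam * (⌊t / lam⌋₊ : ℝ) - lam * (i:ℝ)))
          / ((k+1).factorial : ℝ)
        = lam ^ (k+1) * ((⌊t / lam⌋₊).choose (k+1) : ℝ) := by
      have hmem : Set.Ioo (0:ℝ) (t / (k+1)) ∈ 𝓝[>] (0:ℝ) :=
        Ioo_mem_nhdsGT_of_mem ⟨le_refl 0, by positivity⟩
      filter_upwards [hmem] with lam hlam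
      obtain ⟨hlam0, hlamlt⟩ := hlam
      set m := ⌊t / lam⌋₊ with hm
      have hkm : k + 1 ≤ m := by
        apply Nat.le_floor
        rw [le_div_iff₀ hlam0]
        push_cast
        nlinarith [(lt_div_iff₀ (by positivity : (0:ℝ) < (k:ℝ)+1)).mp hlamlt]
      have hdesc : (m.descFactorial (k+1) : ℝ) = ∏ i ∈ Finset.range (k+1), ((m:ℝ) - (i:ℝ)) := by
        rw [Nat.descFactorial_eq_prod_range, Nat.cast_prod]
        apply Finset.prod_congr rfl
        intro i hi
        have him : i ≤ m := le_trans (Nat.le_of_lt_succ (Finset.mem_range.mp hi)) (by omega)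
        rw [Nat.cast_sub him]
      have hch : (m.choose (k+1) : ℝ) = (m.descFactorial (k+1) : ℝ) / ((k+1).factorial : ℝ) := by
        rw [eq_div_iff (ne_of_gt hfac), mul_comm]
        exact_mod_cast (Nat.descFactorial_eq_factorial_mul_choose m (k+1)).symm
      have hsplit : ∏ i ∈ Finset.range (k+1), (lam * (m:ℝ) - lam * (i:ℝ))
          = lam ^ (k+1) * ∏ i ∈ Finset.range (k+1), ((m:ℝ) - (i:ℝ)) := by
        calc ∏ i ∈ Finset.range (k+1), (lam * (m:ℝ) - lam * (i:ℝ))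
            = ∏ i ∈ Finset.range (k+1), (lam * ((m:ℝ) - (i:ℝ))) := by
              apply Finset.prod_congr rfl; intro i _; ring
          _ = (∏ _i ∈ Finset.range (k+1), lam) * ∏ i ∈ Finset.range (k+1), ((m:ℝ) - (i:ℝ)) :=
              Finset.prod_mul_distrib
          _ = lam ^ (k+1) * ∏ i ∈ Finset.range (k+1), ((m:ℝ) - (i:ℝ)) := by
              rw [Finset.prod_const, Finset.card_range]
      rw [hch, hdesc, hsplit]
      ring
    exact (hprod.div_const _).congr' hev
  -- pointwise vector limits
  have h_lim : ∀ k : ℕ, Tendsto (fun lam : ℝ => f lam k) (𝓝[>] 0) (𝓝 (g k)) := by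
    intro k
    have h1 := ((hscal k).const_mul ((-1:ℝ) ^ k)).smul_const (v k)
    have heq : ∀ lam : ℝ, ((-1:ℝ) ^ k * (lam ^ (k+1) * ((⌊t / lam⌋₊).choose (k+1) : ℝ))) • v k
        = f lam k := by
      intro lam
      rw [hf]
      congr 1
      rw [neg_pow]
      ring
    have heq2 : ((-1:ℝ) ^ k * (t ^ (k+1) / ((k+1).factorial : ℝ))) • v k = g k := by
      rw [hg]
      congr 1
      rw [neg_pow, pow_succ]
      ring
    rw [← heq2]
    exact h1.congr heq
  -- the bound
  set bound : ℕ → ℝ := fun k => t ^ (k+1) / ((k+1).factorial : ℝ) * ‖v k‖ with hbd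
  have h_bound : ∀ᶠ lam in 𝓝[>] (0:ℝ), ∀ k, ‖f lam k‖ ≤ bound k := by
    filter_upwards [self_mem_nhdsWithin] with lam hlam k
    have hlam0 : (0:ℝ) < lam := hlam
    set m := ⌊t / lam⌋₊ with hm
    have hfac : (0:ℝ) < ((k+1).factorial : ℝ) := by exact_mod_cast Nat.factorial_pos (k+1)
    have habs : ‖f lam k‖ = (lam ^ (k+1) * (m.choose (k+1) : ℝ)) * ‖v k‖ := by
      rw [hf]
      simp only [norm_smul, Real.norm_eq_abs]
      congr 1
      rw [abs_mul, abs_mul, abs_pow, abs_neg, abs_of_pos hlam0,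
        abs_of_nonneg (by positivity : (0:ℝ) ≤ (m.choose (k+1) : ℝ)), pow_succ]
    rw [habs, hbd]
    apply mul_le_mul_of_nonneg_right _ (norm_nonneg _)
    have hdle : (m.choose (k+1) : ℝ) ≤ (m:ℝ) ^ (k+1) / ((k+1).factorial : ℝ) := by
      rw [le_div_iff₀ hfac, mul_comm]
      calc ((k+1).factorial : ℝ) * (m.choose (k+1) : ℝ) = (m.descFactorial (k+1) : ℝ) := by
            exact_mod_cast (Nat.descFactorial_eq_factorial_mul_choose m (k+1)).symm
        _ ≤ (m:ℝ) ^ (k+1) := by exact_mod_cast Nat.descFactorial_le_pow m (k+1)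
    calc lam ^ (k+1) * (m.choose (k+1) : ℝ)
        ≤ lam ^ (k+1) * ((m:ℝ) ^ (k+1) / ((k+1).factorial : ℝ)) := by
          have h0 : (0:ℝ) ≤ lam ^ (k+1) := by positivity
          exact mul_le_mul_of_nonneg_left hdle h0
      _ = (lam * (m:ℝ)) ^ (k+1) / ((k+1).factorial : ℝ) := by rw [mul_pow]; ring
      _ ≤ t ^ (k+1) / ((k+1).factorial : ℝ) := by
          have hnn : 0 ≤ lam * (m:ℝ) := mul_nonneg hlam0.le (Nat.cast_nonneg m)
          have hle : lam * (m:ℝ) ≤ t := hub lam hlam0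
          gcongr
  -- summability of the bound
  have h_sum : Summable bound := by
    set L := LinearMap.toContinuousLinearMap (Matrix.mulVecLin S) with hL
    set C := ‖L‖ with hC
    have hC0 : 0 ≤ C := norm_nonneg _
    have hvle : ∀ k, ‖v k‖ ≤ C ^ k * ‖Y‖ := by
      intro k
      induction k with
      | zero => simp [hv]
      | succ k ih =>
        have hvk : v (k+1) = S.mulVec (v k) := by
          rw [hv]
          simp only [pow_succ']
          rw [← Matrix.mulVec_mulVec]
        have hLv : S.mulVec (v k) = L (v k) := by
          rw [hL]
          simp [Matrix.mulVecLin_apply]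
        calc ‖v (k+1)‖ = ‖L (v k)‖ := by rw [hvk, hLv]
          _ ≤ C * ‖v k‖ := L.le_opNorm _
          _ ≤ C * (C ^ k * ‖Y‖) := by
              apply mul_le_mul_of_nonneg_left ih hC0
          _ = C ^ (k+1) * ‖Y‖ := by ring
    refine Summable.of_nonneg_of_le (fun k => ?_) (fun k => ?_)
      ((Real.summable_pow_div_factorial (t*C)).mul_left (t * ‖Y‖))
    · rw [hbd]
      positivity
    · 
      have hfac : (0:ℝ) < ((k+1).factorial : ℝ) := by exact_mod_cast Nat.factorial_pos (k+1)
      calc bound k ≤ t ^ (k+1) / ((k+1).factorial : ℝ) * (C ^ k * ‖Y‖) := by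
            rw [hbd]
            apply mul_le_mul_of_nonneg_left (hvle k) (by positivity)
        _ = (t * (t*C) ^ k * ‖Y‖) / ((k+1).factorial : ℝ) := by rw [mul_pow, pow_succ]; ring
        _ ≤ (t * (t*C) ^ k * ‖Y‖) / (k.factorial : ℝ) := by
            have hnum : (0:ℝ) ≤ t * (t*C) ^ k * ‖Y‖ := by positivity
            gcongr
            omega
        _ = (t * ‖Y‖) * ((t*C) ^ k / (k.factorial : ℝ)) := by ring
  -- assemble
  have main := tendsto_tsum_of_dominated_convergence h_sum h_lim h_bound
  have htarget : ∑' k, g k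
      = -∑' j : ℕ, ((-t) ^ (j + 1) / ((j+1).factorial : ℝ)) • v j := by
    rw [← tsum_neg]
    apply tsum_congr
    intro k
    simp only [hg, neg_smul]
  rw [htarget] at main
  exact main.congr fun lam => (step1 lam).symm
end

section
/- For all T > 0, λ ∈ (0,1], t ∈ [0,T] and integers 1 ≤ j ≤ ⌊t/λ⌋: 0 ≤ t^j/j! - C(⌊t/λ⌋, j) λ^j ≤ (T^j - (T - λj)^j)/j! ≤ λ j² T^{j-1}/j!, where C(m,j) is the binomial coefficient. -/
/-!
With `m = ⌊t/λ⌋` we have `λ m ≤ t < λ (m + 1)`, so the bounds `(m + 1 - j)^j ≤ m!/(m-j)! ≤ m^j`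
squeeze `C(m, j) λ^j` between `(t - λ j)^j / j!` and `t^j / j!`. The width `x^j - (x - λ j)^j` of
this window is monotone in `x`, and at `x = T` it is at most `λ j · j T^(j-1)` by the
mean value bound for `x ↦ x^j`.
-/

open Finset Nat

section OrderedCommRing

variable {R : Type*} [CommRing R] [LinearOrder R] [IsStrictOrderedRing R]

theorem monotoneOn_pow_sub_pow_sub {c : R} (hc : 0 ≤ c) (n : ℕ) :
    MonotoneOn (fun x : R => x ^ n - (x - c) ^ n) (Set.Ici c) := by
  intro b (hcb : c ≤ b) a _ hba
  have hb : 0 ≤ b := hc.trans hcb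
  simp only [← geom_sum₂_mul, sub_sub_cancel]
  gcongr
  exact pow_nonneg (hb.trans hba) _

theorem pow_sub_pow_sub_le {a c : R} (hc : 0 ≤ c) (hca : c ≤ a) (n : ℕ) :
    a ^ n - (a - c) ^ n ≤ c * n * a ^ (n - 1) := by
  have hac : |a - c| ≤ |a| := by
    rw [abs_of_nonneg (sub_nonneg.2 hca), abs_of_nonneg (hc.trans hca)]
    linarith
  calc a ^ n - (a - c) ^ n ≤ |a ^ n - (a - c) ^ n| := le_abs_self _
    _ ≤ |a - (a - c)| * n * max |a| |a - c| ^ (n - 1) := abs_pow_sub_pow_le ..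
    _ = c * n * a ^ (n - 1) := by
      rw [sub_sub_cancel, max_eq_left hac, abs_of_nonneg hc, abs_of_nonneg (hc.trans hca)]

end OrderedCommRing

section OrderedField

variable {α : Type*} [Field α] [LinearOrder α] [IsStrictOrderedRing α]

theorem choose_mul_pow_le_mul_pow_div_factorial {lam : α} (hlam : 0 ≤ lam) (m j : ℕ) :
    (m.choose j : α) * lam ^ j ≤ (lam * m) ^ j / j ! := by
  calc (m.choose j : α) * lam ^ j ≤ (m ^ j : α) / j ! * lam ^ j := by
        gcongr; exact choose_le_pow_div j m
    _ = (lam * m) ^ j / j ! := by ring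

theorem mul_pow_div_factorial_le_choose_mul_pow {lam : α} (hlam : 0 ≤ lam) {m j : ℕ}
    (hj : j ≤ m + 1) : (lam * (m + 1 - j)) ^ j / j ! ≤ (m.choose j : α) * lam ^ j := by
  calc (lam * (m + 1 - j)) ^ j / j ! = ((m + 1 - j : ℕ) ^ j : α) / j ! * lam ^ j := by
        rw [Nat.cast_sub hj, div_mul_eq_mul_div, ← mul_pow]; push_cast; ring_nf
    _ ≤ (m.choose j : α) * lam ^ j := by gcongr; exact pow_le_choose j m

end OrderedField

theorem stmt_19_general (T lam t : ℝ) (hlam0 : 0 < lam)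
    (ht0 : 0 ≤ t) (htT : t ≤ T) (j : ℕ) (hj : j ≤ ⌊t / lam⌋₊) :
    0 ≤ t ^ j / (Nat.factorial j : ℝ) - ((⌊t / lam⌋₊).choose j : ℝ) * lam ^ j ∧
      t ^ j / (Nat.factorial j : ℝ) - ((⌊t / lam⌋₊).choose j : ℝ) * lam ^ j ≤
        (T ^ j - (T - lam * j) ^ j) / (Nat.factorial j : ℝ) ∧
      (T ^ j - (T - lam * j) ^ j) / (Nat.factorial j : ℝ) ≤
        lam * (j : ℝ) ^ 2 * T ^ (j - 1) / (Nat.factorial j : ℝ) := by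
  set m := ⌊t / lam⌋₊
  have hmt : lam * m ≤ t := by
    have := Nat.floor_le (div_nonneg ht0 hlam0.le)
    rwa [le_div_iff₀' hlam0] at this
  have htm : t < lam * (m + 1) := by
    have := Nat.lt_floor_add_one (t / lam)
    rwa [div_lt_iff₀' hlam0] at this
  have hljt : lam * j ≤ t := hmt.trans' (by gcongr)
  have hupper : (m.choose j : ℝ) * lam ^ j ≤ t ^ j / j ! :=
    (choose_mul_pow_le_mul_pow_div_factorial hlam0.le m j).trans (by gcongr)
  have hlower : (t - lam * j) ^ j / j ! ≤ (m.choose j : ℝ) * lam ^ j :=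
    le_trans (by gcongr; linarith)
      (mul_pow_div_factorial_le_choose_mul_pow hlam0.le (hj.trans m.le_succ))
  refine ⟨sub_nonneg.2 hupper, ?_, ?_⟩
  · calc t ^ j / (j ! : ℝ) - m.choose j * lam ^ j ≤ (t ^ j - (t - lam * j) ^ j) / j ! := by
          rw [sub_div]; linarith
      _ ≤ (T ^ j - (T - lam * j) ^ j) / j ! := by
          gcongr ?_ / _
          exact monotoneOn_pow_sub_pow_sub (by positivity) j hljt (hljt.trans htT) htT
  · gcongr
    calc T ^ j - (T - lam * j) ^ j ≤ lam * j * j * T ^ (j - 1) :=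
          pow_sub_pow_sub_le (by positivity) (hljt.trans htT) j
      _ = lam * j ^ 2 * T ^ (j - 1) := by ring

theorem stmt_19 (T lam t : ℝ) (hT : 0 < T) (hlam0 : 0 < lam) (hlam1 : lam ≤ 1)
    (ht0 : 0 ≤ t) (htT : t ≤ T) (j : ℕ) (hj1 : 1 ≤ j) (hj : j ≤ ⌊t / lam⌋₊) :
    0 ≤ t ^ j / (Nat.factorial j : ℝ) - ((⌊t / lam⌋₊).choose j : ℝ) * lam ^ j ∧
      t ^ j / (Nat.factorial j : ℝ) - ((⌊t / lam⌋₊).choose j : ℝ) * lam ^ j ≤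
        (T ^ j - (T - lam * j) ^ j) / (Nat.factorial j : ℝ) ∧
      (T ^ j - (T - lam * j) ^ j) / (Nat.factorial j : ℝ) ≤
        lam * (j : ℝ) ^ 2 * T ^ (j - 1) / (Nat.factorial j : ℝ) :=
  stmt_19_general T lam t hlam0 ht0 htT j hj
end
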